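/- arXiv:2305.06547 — 6 statements merged into one kernel-verified Lean document; each statement's English description precedes it below -/
import Mathlib

section
/- Suppose the pair (V, π) is ε-stable on a set R with margin ζ, D(R,ρ) is an R-invariant sublevel set, and x₀ ∈ D(R,ρ) with ‖x₀‖∞ ≥ ε. Then the closed-loop trajectory x_{k+1} = f(x_k, π(x_k)) reaches the ball B(0,ε) in finite time: there exists a finite K with ‖x_K‖∞ < ε. -/
/-- ε-stability plus an R-invariant sublevel set implies the
closed-loop trajectory reaches the ball B(0,ε) in finite time. -/
theorem eps_stable_reaches_ball {n m : ℕ}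
    (f : (Fin n → ℝ) → (Fin m → ℝ) → (Fin n → ℝ))
    (π : (Fin n → ℝ) → (Fin m → ℝ))
    (V : (Fin n → ℝ) → ℝ)
    (R : Set (Fin n → ℝ)) (ε ζ ρ : ℝ)
    (hε : 0 < ε) (hζ : 0 < ζ)
    (hV0 : V 0 = 0)
    (hdec : ∀ x ∈ R, ε ≤ ‖x‖ → V (f x (π x)) - V x < -ζ)
    (hpos : ∀ x ∈ R, ε ≤ ‖x‖ → 0 < V x)
    (hinv : ∀ x ∈ R, V x ≤ ρ → f x (π x) ∈ R)
    (x : ℕ → Fin n → ℝ)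
    (hx : ∀ k, x (k + 1) = f (x k) (π (x k)))
    (hx0R : x 0 ∈ R) (hx0ρ : V (x 0) ≤ ρ) (hx0ε : ε ≤ ‖x 0‖) :
    ∃ K : ℕ, ‖x K‖ < ε := by
  by_contra h
  push_neg at h
  have key : ∀ k, x k ∈ R ∧ V (x k) ≤ ρ ∧ V (x k) ≤ V (x 0) - k * ζ := by
    intro k
    induction k with
    | zero => exact ⟨hx0R, hx0ρ, by simp⟩
    | succ k ih =>
      obtain ⟨hR, hρ, hbound⟩ := ih
      have hnorm := h k
      have hmemR : x (k + 1) ∈ R := by rw [hx k]; exact hinv _ hR hρ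
      have hdrop : V (x (k + 1)) - V (x k) < -ζ := by
        rw [hx k]; exact hdec _ hR hnorm
      refine ⟨hmemR, by linarith, ?_⟩
      push_cast
      linarith
  obtain ⟨k, hk⟩ := exists_nat_gt (V (x 0) / ζ)
  obtain ⟨hR, _, hbound⟩ := key k
  have := hpos _ hR (h k)
  have : V (x 0) < k * ζ := by
    rw [div_lt_iff₀ hζ] at hk; linarith
  linarith
end

section
/- Suppose the pair (V, π) is ε-stable on a set R with margin ζ, D(R,ρ) is an R-invariant sublevel set, and x₀ ∈ D(R,ρ) with ‖x₀‖∞ ≥ ε. Then along the closed-loop trajectory x_{k+1} = f(x_k, π(x_k)) there exists K ≤ ⌈V(x₀)/ζ⌉ with ‖x_K‖∞ < ε; that is, the trajectory enters B(0,ε) within at most ⌈V(x₀)/ζ⌉ steps. -/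
/-- the trajectory enters B(0,ε) within at most ⌈V(x₀)/ζ⌉ steps. -/
theorem eps_stable_reaches_ball_within_ceil {n m : ℕ}
    (f : (Fin n → ℝ) → (Fin m → ℝ) → (Fin n → ℝ))
    (π : (Fin n → ℝ) → (Fin m → ℝ))
    (V : (Fin n → ℝ) → ℝ)
    (R : Set (Fin n → ℝ)) (ε ζ ρ : ℝ)
    (hε : 0 < ε) (hζ : 0 < ζ)
    (hV0 : V 0 = 0)
    (hdec : ∀ x ∈ R, ε ≤ ‖x‖ → V (f x (π x)) - V x < -ζ)
    (hpos : ∀ x ∈ R, ε ≤ ‖x‖ → 0 < V x)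
    (hinv : ∀ x ∈ R, V x ≤ ρ → f x (π x) ∈ R)
    (x : ℕ → Fin n → ℝ)
    (hx : ∀ k, x (k + 1) = f (x k) (π (x k)))
    (hx0R : x 0 ∈ R) (hx0ρ : V (x 0) ≤ ρ) (hx0ε : ε ≤ ‖x 0‖) :
    ∃ K : ℕ, K ≤ ⌈V (x 0) / ζ⌉₊ ∧ ‖x K‖ < ε := by
  by_contra h
  push_neg at h
  set N := ⌈V (x 0) / ζ⌉₊ with hN
  have hball : ∀ K ≤ N, ε ≤ ‖x K‖ := h
  have key : ∀ k ≤ N, x k ∈ R ∧ V (x k) ≤ V (x 0) - k * ζ := by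
    intro k hk
    induction k with
    | zero => exact ⟨hx0R, by simp⟩
    | succ j ih =>
      have hj : j ≤ N := Nat.le_of_succ_le hk
      obtain ⟨hjR, hjV⟩ := ih hj
      have hjε : ε ≤ ‖x j‖ := hball j hj
      have hjρ : V (x j) ≤ ρ := by
        have : (j : ℝ) * ζ ≥ 0 := by positivity
        linarith
      have hR' : x (j + 1) ∈ R := by rw [hx j]; exact hinv _ hjR hjρ
      have hdecj := hdec _ hjR hjε
      rw [← hx j] at hdecj
      refine ⟨hR', ?_⟩
      push_cast
      linarith
  obtain ⟨hNR, hNV⟩ := key N le_rfl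
  have hNε := hball N le_rfl
  have hposN := hpos _ hNR hNε
  have hle : V (x 0) ≤ N * ζ := by
    have h1 : V (x 0) / ζ ≤ (N : ℝ) := Nat.le_ceil _
    calc V (x 0) = (V (x 0) / ζ) * ζ := by field_simp
    _ ≤ N * ζ := by nlinarith
  linarith
end

section
/- Suppose the pair (V, π) is ε-stable on a compact set R with margin ζ, D(R,ρ) is an R-invariant sublevel set, f is L_f-Lipschitz on ℝⁿ × ℝᵐ with respect to the max of the two sup norms, π is L_π-Lipschitz, V is L_v-Lipschitz, f(0, u₀) = 0, and ‖π(0) − u₀‖∞ ≤ c₁·ε. Let c₂ = max{L_v, 1} · L_f · max{1, L_π + c₁}, and assume c₂·ε < ρ and B(0, c₂·ε) ⊆ R. Then for any initial point x₀ ∈ D(R,ρ) with ‖x₀‖∞ ≥ ε, there exists a finite K such that for all k ≥ K the closed-loop trajectory satisfies x_k ∈ R and V(x_k) ≤ c₂·ε (i.e., x_k ∈ D(R, c₂·ε)). -/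
/-- eventually the trajectory stays in the sublevel set
D(R, c₂ε), where c₂ = max{L_v,1}·L_f·max{1, L_π + c₁}. -/
theorem eps_stable_eventually_in_sublevel {n m : ℕ}
    (f : (Fin n → ℝ) → (Fin m → ℝ) → (Fin n → ℝ))
    (π : (Fin n → ℝ) → (Fin m → ℝ))
    (V : (Fin n → ℝ) → ℝ) (u₀ : Fin m → ℝ)
    (R : Set (Fin n → ℝ)) (ε ζ ρ Lf Lπ Lv c₁ : ℝ)
    (hR : IsCompact R)
    (hε : 0 < ε) (hζ : 0 < ζ)
    (hV0 : V 0 = 0)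
    (hdec : ∀ x ∈ R, ε ≤ ‖x‖ → V (f x (π x)) - V x < -ζ)
    (hpos : ∀ x ∈ R, ε ≤ ‖x‖ → 0 < V x)
    (hinv : ∀ x ∈ R, V x ≤ ρ → f x (π x) ∈ R)
    (hLf0 : 0 ≤ Lf) (hLπ0 : 0 ≤ Lπ) (hLv0 : 0 ≤ Lv)
    (hf : ∀ (x₁ x₂ : Fin n → ℝ) (u₁ u₂ : Fin m → ℝ),
      ‖f x₁ u₁ - f x₂ u₂‖ ≤ Lf * max ‖x₁ - x₂‖ ‖u₁ - u₂‖)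
    (hπ : ∀ x y : Fin n → ℝ, ‖π x - π y‖ ≤ Lπ * ‖x - y‖)
    (hV : ∀ x y : Fin n → ℝ, |V x - V y| ≤ Lv * ‖x - y‖)
    (hf0 : f 0 u₀ = 0)
    (hc₁ : 0 ≤ c₁) (hπ0 : ‖π 0 - u₀‖ ≤ c₁ * ε)
    (hc₂ρ : (max Lv 1 * Lf * max 1 (Lπ + c₁)) * ε < ρ)
    (hball : {y : Fin n → ℝ | ‖y‖ < (max Lv 1 * Lf * max 1 (Lπ + c₁)) * ε} ⊆ R)
    (x : ℕ → Fin n → ℝ)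
    (hx : ∀ k, x (k + 1) = f (x k) (π (x k)))
    (hx0R : x 0 ∈ R) (hx0ρ : V (x 0) ≤ ρ) (hx0ε : ε ≤ ‖x 0‖) :
    ∃ K : ℕ, ∀ k ≥ K,
      x k ∈ R ∧ V (x k) ≤ (max Lv 1 * Lf * max 1 (Lπ + c₁)) * ε := by
  set c₂ : ℝ := max Lv 1 * Lf * max 1 (Lπ + c₁) with hc₂def
  have hc₂0 : 0 ≤ c₂ := by positivity
  -- step lemma: if ‖y‖ < ε then V (f y (π y)) ≤ c₂ * ε
  have step : ∀ y : Fin n → ℝ, ‖y‖ < ε → V (f y (π y)) ≤ c₂ * ε := by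
    intro y hy
    have h1 : ‖π y - u₀‖ ≤ (Lπ + c₁) * ε := by
      calc ‖π y - u₀‖ ≤ ‖π y - π 0‖ + ‖π 0 - u₀‖ := by
            have := norm_sub_le_norm_sub_add_norm_sub (π y) (π 0) u₀
            linarith [norm_sub_le (π y - π 0) (u₀ - π 0)]
        _ ≤ Lπ * ‖y - 0‖ + c₁ * ε := add_le_add (hπ y 0) hπ0
        _ = Lπ * ‖y‖ + c₁ * ε := by rw [sub_zero]
        _ ≤ Lπ * ε + c₁ * ε := by nlinarith [norm_nonneg y]
        _ = (Lπ + c₁) * ε := by ring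
    have h2 : max ‖y‖ ‖π y - u₀‖ ≤ max 1 (Lπ + c₁) * ε := by
      rw [max_mul_of_nonneg _ _ hε.le, one_mul]
      exact max_le_max hy.le h1
    have h3 : ‖f y (π y)‖ ≤ Lf * (max 1 (Lπ + c₁) * ε) := by
      have := hf y 0 (π y) u₀
      rw [hf0, sub_zero, sub_zero] at this
      exact this.trans (by nlinarith)
    have h4 : V (f y (π y)) ≤ Lv * ‖f y (π y)‖ := by
      have := hV (f y (π y)) 0
      rw [hV0, sub_zero, sub_zero] at this
      linarith [le_abs_self (V (f y (π y)))]
    have hLv : Lv ≤ max Lv 1 := le_max_left _ _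
    have hfe : 0 ≤ Lf * (max 1 (Lπ + c₁) * ε) := by positivity
    calc V (f y (π y)) ≤ Lv * (Lf * (max 1 (Lπ + c₁) * ε)) := by nlinarith
      _ ≤ max Lv 1 * (Lf * (max 1 (Lπ + c₁) * ε)) := by nlinarith
      _ = c₂ * ε := by rw [hc₂def]; ring
  -- global invariant
  have inv : ∀ k, x k ∈ R ∧ V (x k) ≤ ρ := by
    intro k
    induction k with
    | zero => exact ⟨hx0R, hx0ρ⟩
    | succ k ih =>
      obtain ⟨hkR, hkρ⟩ := ih
      have hnext : x (k + 1) ∈ R := by rw [hx]; exact hinv _ hkR hkρ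
      refine ⟨hnext, ?_⟩
      by_cases hc : ε ≤ ‖x k‖
      · have := hdec _ hkR hc
        rw [hx]; linarith
      · push_neg at hc
        rw [hx]
        exact (step _ hc).trans hc₂ρ.le
  -- there exists K with ‖x K‖ < ε
  have hex : ∃ K, ‖x K‖ < ε := by
    by_contra h
    push_neg at h
    have dec : ∀ k, V (x k) ≤ V (x 0) - k * ζ := by
      intro k
      induction k with
      | zero => simp
      | succ k ih =>
        have := hdec _ (inv k).1 (h k)
        rw [← hx] at this
        push_cast
        linarith
    obtain ⟨k, hk⟩ := exists_nat_gt (V (x 0) / ζ)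
    have hk' : V (x 0) < k * ζ := by
      rw [div_lt_iff₀ hζ] at hk; linarith
    have := hpos _ (inv k).1 (h k)
    have := dec k
    linarith
  obtain ⟨K, hK⟩ := hex
  refine ⟨K + 1, ?_⟩
  have main : ∀ k, K + 1 ≤ k → V (x k) ≤ c₂ * ε := by
    intro k hk
    induction k, hk using Nat.le_induction with
    | base => rw [hx]; exact step _ hK
    | succ k hk ih =>
      by_cases hc : ε ≤ ‖x k‖
      · have := hdec _ (inv k).1 hc
        rw [hx]; linarith
      · push_neg at hc
        rw [hx]; exact step _ hc
  exact fun k hk => ⟨(inv k).1, main k hk⟩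
end

section
/- Suppose the pair (V, π) is ε-stable on a compact set R with margin ζ, D(R,ρ) is an R-invariant sublevel set, f is L_f-Lipschitz on ℝⁿ × ℝᵐ with respect to the max of the two sup norms, π is L_π-Lipschitz, V is L_v-Lipschitz, f(0, u₀) = 0, and ‖π(0) − u₀‖∞ ≤ c₁·ε. Let c₂ = max{L_v, 1} · L_f · max{1, L_π + c₁}, and assume c₂·ε < ρ and B(0, c₂·ε) ⊆ R. Then for any initial point x₀ ∈ D(R,ρ) with ‖x₀‖∞ ≥ ε, the closed-loop trajectory reaches B(0,ε) infinitely often: the set {k ∈ ℕ : ‖x_k‖∞ < ε} is infinite. -/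
/-- the closed-loop trajectory reaches the ball B(0,ε)
infinitely often. -/
theorem eps_stable_reaches_ball_infinitely_often {n m : ℕ}
    (f : (Fin n → ℝ) → (Fin m → ℝ) → (Fin n → ℝ))
    (π : (Fin n → ℝ) → (Fin m → ℝ))
    (V : (Fin n → ℝ) → ℝ) (u₀ : Fin m → ℝ)
    (R : Set (Fin n → ℝ)) (ε ζ ρ Lf Lπ Lv c₁ : ℝ)
    (hR : IsCompact R)
    (hε : 0 < ε) (hζ : 0 < ζ)
    (hV0 : V 0 = 0)
    (hdec : ∀ x ∈ R, ε ≤ ‖x‖ → V (f x (π x)) - V x < -ζ)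
    (hpos : ∀ x ∈ R, ε ≤ ‖x‖ → 0 < V x)
    (hinv : ∀ x ∈ R, V x ≤ ρ → f x (π x) ∈ R)
    (hLf0 : 0 ≤ Lf) (hLπ0 : 0 ≤ Lπ) (hLv0 : 0 ≤ Lv)
    (hf : ∀ (x₁ x₂ : Fin n → ℝ) (u₁ u₂ : Fin m → ℝ),
      ‖f x₁ u₁ - f x₂ u₂‖ ≤ Lf * max ‖x₁ - x₂‖ ‖u₁ - u₂‖)
    (hπ : ∀ x y : Fin n → ℝ, ‖π x - π y‖ ≤ Lπ * ‖x - y‖)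
    (hV : ∀ x y : Fin n → ℝ, |V x - V y| ≤ Lv * ‖x - y‖)
    (hf0 : f 0 u₀ = 0)
    (hc₁ : 0 ≤ c₁) (hπ0 : ‖π 0 - u₀‖ ≤ c₁ * ε)
    (hc₂ρ : (max Lv 1 * Lf * max 1 (Lπ + c₁)) * ε < ρ)
    (hball : {y : Fin n → ℝ | ‖y‖ < (max Lv 1 * Lf * max 1 (Lπ + c₁)) * ε} ⊆ R)
    (x : ℕ → Fin n → ℝ)
    (hx : ∀ k, x (k + 1) = f (x k) (π (x k)))
    (hx0R : x 0 ∈ R) (hx0ρ : V (x 0) ≤ ρ) (hx0ε : ε ≤ ‖x 0‖) :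
    {k : ℕ | ‖x k‖ < ε}.Infinite := by
  -- Exit lemma: from any good state, the trajectory eventually enters the ball.
  have hexit : ∀ k, x k ∈ R → V (x k) ≤ ρ → ∃ j, k ≤ j ∧ ‖x j‖ < ε := by
    intro k hkR hkρ
    by_contra h
    push_neg at h
    have key : ∀ t : ℕ, x (k + t) ∈ R ∧ V (x (k + t)) ≤ ρ - t * ζ := by
      intro t
      induction t with
      | zero => simpa using ⟨hkR, hkρ⟩
      | succ t ih =>
        obtain ⟨hR', hV'⟩ := ih
        have hn : ε ≤ ‖x (k + t)‖ := h _ (Nat.le_add_right _ _)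
        have htnn : (0 : ℝ) ≤ (t : ℝ) := t.cast_nonneg
        have hVρ : V (x (k + t)) ≤ ρ := by nlinarith
        refine ⟨?_, ?_⟩
        · rw [show k + (t + 1) = (k + t) + 1 from rfl, hx]
          exact hinv _ hR' hVρ
        · have hd := hdec _ hR' hn
          rw [show k + (t + 1) = (k + t) + 1 from rfl, hx]
          push_cast
          nlinarith
    obtain ⟨t, ht⟩ : ∃ t : ℕ, ρ - (t : ℝ) * ζ < 0 := by
      obtain ⟨t, ht⟩ := exists_nat_gt (ρ / ζ)
      have := (div_lt_iff₀ hζ).1 ht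
      exact ⟨t, by linarith⟩
    obtain ⟨h1, h2⟩ := key t
    have := hpos _ h1 (h _ (Nat.le_add_right _ _))
    linarith
  -- abbreviations
  have hM1 : (1 : ℝ) ≤ max 1 (Lπ + c₁) := le_max_left _ _
  have hMv : (1 : ℝ) ≤ max Lv 1 := le_max_right _ _
  have hLvM : Lv ≤ max Lv 1 := le_max_left _ _
  -- one step from inside the ball
  have hstep : ∀ y : Fin n → ℝ, ‖y‖ < ε →
      ‖f y (π y)‖ ≤ Lf * (max 1 (Lπ + c₁) * ε) := by
    intro y hy
    have h1 : ‖f y (π y)‖ = ‖f y (π y) - f 0 u₀‖ := by rw [hf0, sub_zero]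
    have h2 := hf y 0 (π y) u₀
    have h3 : ‖π y - u₀‖ ≤ Lπ * ‖y‖ + c₁ * ε := by
      calc ‖π y - u₀‖ ≤ ‖π y - π 0‖ + ‖π 0 - u₀‖ := norm_sub_le_norm_sub_add_norm_sub _ _ _
        _ ≤ Lπ * ‖y‖ + c₁ * ε := by
            have := hπ y 0
            rw [sub_zero] at this
            exact add_le_add this hπ0
    have h4 : max ‖y - 0‖ ‖π y - u₀‖ ≤ max 1 (Lπ + c₁) * ε := by
      rw [sub_zero]
      apply max_le
      · nlinarith
      · have h5 : Lπ * ‖y‖ + c₁ * ε ≤ (Lπ + c₁) * ε := by nlinarith [norm_nonneg y]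
        have h6 : (Lπ + c₁) * ε ≤ max 1 (Lπ + c₁) * ε := by
          have := le_max_right (1 : ℝ) (Lπ + c₁)
          nlinarith
        linarith
    calc ‖f y (π y)‖ = ‖f y (π y) - f 0 u₀‖ := h1
      _ ≤ Lf * max ‖y - 0‖ ‖π y - u₀‖ := h2
      _ ≤ Lf * (max 1 (Lπ + c₁) * ε) := by
          apply mul_le_mul_of_nonneg_left h4 hLf0
  -- it suffices to find elements of the set above any bound
  have hsuff : (∀ N : ℕ, ∃ k, N ≤ k ∧ ‖x k‖ < ε) → {k : ℕ | ‖x k‖ < ε}.Infinite := by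
    intro hch
    by_contra hfin
    rw [Set.not_infinite] at hfin
    obtain ⟨b, hb⟩ := hfin.bddAbove
    obtain ⟨k, hk1, hk2⟩ := hch (b + 1)
    have := hb hk2
    omega
  rcases eq_or_lt_of_le hLf0 with hLf | hLf
  · -- Lf = 0 : f is constant, everything maps to 0
    have hconst : ∀ (y : Fin n → ℝ) (u : Fin m → ℝ), f y u = 0 := by
      intro y u
      have h1 := hf y 0 u u₀
      rw [← hLf, zero_mul] at h1
      have : f y u - f 0 u₀ = 0 := by
        have := norm_nonneg (f y u - f 0 u₀)
        exact norm_eq_zero.1 (le_antisymm h1 this)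
      have := sub_eq_zero.1 this
      rw [this, hf0]
    apply hsuff
    intro N
    refine ⟨N + 1, Nat.le_succ _, ?_⟩
    have : x (N + 1) = 0 := by rw [hx, hconst]
    rw [this]
    simpa using hε
  · -- Lf > 0
    set c₂ : ℝ := max Lv 1 * Lf * max 1 (Lπ + c₁) with hc₂def
    have hc₂pos : 0 < c₂ * ε := by
      have h0 : 0 < c₂ := by
        rw [hc₂def]
        exact mul_pos (mul_pos (lt_of_lt_of_le zero_lt_one hMv) hLf)
          (lt_of_lt_of_le zero_lt_one hM1)
      positivity
    have hclosed : ∀ y : Fin n → ℝ, ‖y‖ ≤ c₂ * ε → y ∈ R := by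
      intro y hy
      have hsub : Metric.closedBall (0 : Fin n → ℝ) (c₂ * ε) ⊆ R := by
        rw [← closure_ball (0 : Fin n → ℝ) hc₂pos.ne']
        refine (IsClosed.closure_subset_iff hR.isClosed).2 ?_
        intro z hz
        apply hball
        simpa [Metric.mem_ball, dist_zero_right] using hz
      exact hsub (by simpa [Metric.mem_closedBall, dist_zero_right] using hy)
    have hbnd : ∀ k, ‖x k‖ < ε → ‖x (k + 1)‖ ≤ c₂ * ε := by
      intro k hk
      rw [hx]
      have h1 := hstep (x k) hk
      have hMε : 0 ≤ max 1 (Lπ + c₁) * ε := by nlinarith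
      calc ‖f (x k) (π (x k))‖ ≤ Lf * (max 1 (Lπ + c₁) * ε) := h1
        _ ≤ c₂ * ε := by
            rw [hc₂def]
            nlinarith [mul_nonneg (sub_nonneg.2 hMv) (mul_nonneg hLf0 hMε)]
    have hrecover : ∀ k, ‖x k‖ < ε → x (k + 1) ∈ R ∧ V (x (k + 1)) ≤ ρ := by
      intro k hk
      have h1 := hbnd k hk
      refine ⟨hclosed _ h1, ?_⟩
      have h2 := hV (x (k + 1)) 0
      rw [hV0, sub_zero, sub_zero] at h2
      have h3 : V (x (k + 1)) ≤ Lv * ‖x (k + 1)‖ := le_of_abs_le h2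
      have h4 := hstep (x k) hk
      rw [← hx k] at h4
      have hMε : 0 ≤ max 1 (Lπ + c₁) * ε := by nlinarith
      have h5 : Lv * ‖x (k + 1)‖ ≤ max Lv 1 * (Lf * (max 1 (Lπ + c₁) * ε)) :=
        mul_le_mul hLvM h4 (norm_nonneg _) (le_trans hLv0 hLvM)
      have h6 : max Lv 1 * (Lf * (max 1 (Lπ + c₁) * ε)) = c₂ * ε := by
        rw [hc₂def]; ring
      linarith [hc₂ρ]
    apply hsuff
    intro N
    induction N with
    | zero =>
      obtain ⟨j, _, hj⟩ := hexit 0 hx0R hx0ρ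
      exact ⟨j, Nat.zero_le _, hj⟩
    | succ N ih =>
      obtain ⟨k, hk, hkε⟩ := ih
      obtain ⟨h1, h2⟩ := hrecover k hkε
      obtain ⟨j, hj, hjε⟩ := hexit (k + 1) h1 h2
      exact ⟨j, le_trans (Nat.succ_le_succ hk) hj, hjε⟩
end

section
/- Let R ⊆ ℝⁿ be compact, let V : ℝⁿ → ℝ be L_v-Lipschitz, π : ℝⁿ → ℝᵐ be L_π-Lipschitz, f : ℝⁿ × ℝᵐ → ℝⁿ be L_f-Lipschitz with respect to the max of the two sup norms, f(0, u₀) = 0, and suppose that for every ε' > 0 there exists ζ > 0 such that (V, π) is ε'-stable on R with margin ζ. Fix c₁ ≥ 0 and set c₂ = max{L_v, 1} · L_f · max{1, L_π + c₁}. Then for any η > 0 with B(0,η) ⊆ R and any ρ > 0 with D(R,ρ) an R-invariant sublevel set, there exists ε > 0 with c₂·ε < ρ and B(0, c₂·ε) ⊆ R such that: whenever ‖π(0) − u₀‖∞ ≤ c₁·ε and x₀ ∈ D(R,ρ) with ‖x₀‖∞ ≥ ε, there is a finite K with ‖x_k‖∞ ≤ η for all k ≥ K along the closed-loop trajectory.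 -/
set_option maxHeartbeats 1000000


/-- convergence to an arbitrarily small ball around the origin:
for any η > 0 with B(0,η) ⊆ R and any invariant sublevel set D(R,ρ), there is
ε > 0 such that every trajectory starting in D(R,ρ) outside B(0,ε) eventually
stays within ‖x‖ ≤ η. -/
theorem eps_stable_converges_to_small_ball {n m : ℕ}
    (f : (Fin n → ℝ) → (Fin m → ℝ) → (Fin n → ℝ))
    (π : (Fin n → ℝ) → (Fin m → ℝ))
    (V : (Fin n → ℝ) → ℝ) (u₀ : Fin m → ℝ)
    (R : Set (Fin n → ℝ)) (Lf Lπ Lv c₁ : ℝ)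
    (hR : IsCompact R)
    (hLf0 : 0 ≤ Lf) (hLπ0 : 0 ≤ Lπ) (hLv0 : 0 ≤ Lv)
    (hf : ∀ (x₁ x₂ : Fin n → ℝ) (u₁ u₂ : Fin m → ℝ),
      ‖f x₁ u₁ - f x₂ u₂‖ ≤ Lf * max ‖x₁ - x₂‖ ‖u₁ - u₂‖)
    (hπ : ∀ x y : Fin n → ℝ, ‖π x - π y‖ ≤ Lπ * ‖x - y‖)
    (hV : ∀ x y : Fin n → ℝ, |V x - V y| ≤ Lv * ‖x - y‖)
    (hf0 : f 0 u₀ = 0)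
    (hstab : ∀ ε' > (0 : ℝ), ∃ ζ > (0 : ℝ),
      V 0 = 0 ∧
      (∀ x ∈ R, ε' ≤ ‖x‖ → V (f x (π x)) - V x < -ζ) ∧
      (∀ x ∈ R, ε' ≤ ‖x‖ → 0 < V x))
    (hc₁ : 0 ≤ c₁) :
    ∀ η > (0 : ℝ), {y : Fin n → ℝ | ‖y‖ < η} ⊆ R →
    ∀ ρ > (0 : ℝ), (∀ x ∈ R, V x ≤ ρ → f x (π x) ∈ R) →
    ∃ ε > (0 : ℝ),
      (max Lv 1 * Lf * max 1 (Lπ + c₁)) * ε < ρ ∧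
      {y : Fin n → ℝ | ‖y‖ < (max Lv 1 * Lf * max 1 (Lπ + c₁)) * ε} ⊆ R ∧
      (‖π 0 - u₀‖ ≤ c₁ * ε →
        ∀ x : ℕ → Fin n → ℝ, (∀ k, x (k + 1) = f (x k) (π (x k))) →
          x 0 ∈ R → V (x 0) ≤ ρ → ε ≤ ‖x 0‖ →
          ∃ K : ℕ, ∀ k ≥ K, ‖x k‖ ≤ η) := by
  intro η hη hηR ρ hρ hinv
  set c₂ : ℝ := max Lv 1 * Lf * max 1 (Lπ + c₁) with hc₂def
  have hmax1 : (1:ℝ) ≤ max 1 (Lπ + c₁) := le_max_left _ _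
  have hmaxLv : (1:ℝ) ≤ max Lv 1 := le_max_right _ _
  have hc₂0 : 0 ≤ c₂ := by
    apply mul_nonneg (mul_nonneg (by linarith) hLf0) (by linarith)
  -- continuity of V
  have hVcont : Continuous V := by
    have : LipschitzWith (Real.toNNReal Lv) V := by
      apply LipschitzWith.of_dist_le_mul
      intro x y
      rw [Real.dist_eq, dist_eq_norm, Real.coe_toNNReal _ hLv0]
      exact hV x y
    exact this.continuous
  -- positive lower bound μ of V on {x ∈ R : η ≤ ‖x‖}
  obtain ⟨ζη, hζη, _, _, hVposη⟩ := hstab η hη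
  have hμex : ∃ μ > (0:ℝ), ∀ z ∈ R, η ≤ ‖z‖ → μ ≤ V z := by
    have hSc : IsCompact (R ∩ {z : Fin n → ℝ | η ≤ ‖z‖}) :=
      hR.inter_right (isClosed_le continuous_const continuous_norm)
    rcases (R ∩ {z : Fin n → ℝ | η ≤ ‖z‖}).eq_empty_or_nonempty with hS | hS
    · refine ⟨1, one_pos, fun z hz hnz => absurd ?_ (Set.notMem_empty z)⟩
      rw [← hS]; exact ⟨hz, hnz⟩
    · obtain ⟨z, hzS, hz⟩ := hSc.exists_isMinOn hS hVcont.continuousOn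
      exact ⟨V z, hVposη z hzS.1 hzS.2, fun w hw hnw => hz ⟨hw, hnw⟩⟩
  obtain ⟨μ, hμ, hμlb⟩ := hμex
  -- choose ε
  set D : ℝ := c₂ + Lv + 1 with hDdef
  have hD1 : (1:ℝ) ≤ D := by simp only [hDdef]; linarith
  have hD0 : (0:ℝ) < D := by linarith
  set M : ℝ := min (min η ρ) μ with hMdef
  have hM : 0 < M := lt_min (lt_min hη hρ) hμ
  have hMη : M ≤ η := le_trans (min_le_left _ _) (min_le_left _ _)
  have hMρ : M ≤ ρ := le_trans (min_le_left _ _) (min_le_right _ _)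
  have hMμ : M ≤ μ := min_le_right _ _
  set ε : ℝ := M / D with hεdef
  have hε : 0 < ε := div_pos hM hD0
  have hεM : ε ≤ M := div_le_self hM.le hD1
  have key : ∀ a b : ℝ, 0 ≤ a → a < D → 0 < b → M ≤ b → a * ε < b := by
    intro a b ha haD hb hMb
    rw [show a * (M / D) = a * M / D from (mul_div_assoc a M D).symm, div_lt_iff₀ hD0]
    nlinarith
  have hc₂ρ : c₂ * ε < ρ := key c₂ ρ hc₂0 (by simp only [hDdef]; linarith) hρ hMρ
  have hc₂η : c₂ * ε < η := key c₂ η hc₂0 (by simp only [hDdef]; linarith) hη hMη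
  have hc₂μ : c₂ * ε < μ := key c₂ μ hc₂0 (by simp only [hDdef]; linarith) hμ hMμ
  have hLvρ : Lv * ε < ρ := key Lv ρ hLv0 (by simp only [hDdef]; linarith) hρ hMρ
  refine ⟨ε, hε, hc₂ρ, fun y hy => hηR (lt_trans hy hc₂η), ?_⟩
  intro hπ0 x hx hx0R hx0V hx0ε
  obtain ⟨ζ, hζ, hV0, hdec, hVpos⟩ := hstab ε hε
  -- V z ≤ Lv * ‖z‖
  have hVbound : ∀ z : Fin n → ℝ, V z ≤ Lv * ‖z‖ := by
    intro z
    have h := hV z 0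
    rw [hV0, sub_zero, sub_zero] at h
    exact le_trans (le_abs_self _) h
  -- small step bound
  have hstep_small : ∀ z : Fin n → ℝ, ‖z‖ ≤ ε →
      ‖f z (π z)‖ ≤ Lf * max 1 (Lπ + c₁) * ε := by
    intro z hz
    have h1 : ‖f z (π z)‖ = ‖f z (π z) - f 0 u₀‖ := by rw [hf0, sub_zero]
    have h2 := hf z 0 (π z) u₀
    rw [sub_zero] at h2
    have h3 : ‖π z - u₀‖ ≤ (Lπ + c₁) * ε := by
      have := norm_sub_le_norm_sub_add_norm_sub (π z) (π 0) u₀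
      have h4 := hπ z 0
      rw [sub_zero] at h4
      have h5 : Lπ * ‖z‖ ≤ Lπ * ε := mul_le_mul_of_nonneg_left hz hLπ0
      nlinarith
    have h4 : max ‖z‖ ‖π z - u₀‖ ≤ max 1 (Lπ + c₁) * ε := by
      apply max_le
      · calc ‖z‖ ≤ ε := hz
          _ = 1 * ε := (one_mul ε).symm
          _ ≤ max 1 (Lπ + c₁) * ε := mul_le_mul_of_nonneg_right hmax1 hε.le
      · exact le_trans h3 (mul_le_mul_of_nonneg_right (le_max_right _ _) hε.le)
    calc ‖f z (π z)‖ = ‖f z (π z) - f 0 u₀‖ := h1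
      _ ≤ Lf * max ‖z‖ ‖π z - u₀‖ := h2
      _ ≤ Lf * (max 1 (Lπ + c₁) * ε) := mul_le_mul_of_nonneg_left h4 hLf0
      _ = Lf * max 1 (Lπ + c₁) * ε := (mul_assoc _ _ _).symm
  -- invariant set step
  have hΩstep : ∀ z : Fin n → ℝ, z ∈ R → (‖z‖ < ε ∨ V z ≤ c₂ * ε) →
      f z (π z) ∈ R ∧ (‖f z (π z)‖ < ε ∨ V (f z (π z)) ≤ c₂ * ε) := by
    intro z hzR hz
    rcases lt_or_ge ‖z‖ ε with hsmall | hbig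
    · have hVz : V z ≤ ρ := by
        have := hVbound z
        have h5 : Lv * ‖z‖ ≤ Lv * ε := mul_le_mul_of_nonneg_left hsmall.le hLv0
        linarith
      refine ⟨hinv z hzR hVz, Or.inr ?_⟩
      have hns := hstep_small z hsmall.le
      have hVn := hVbound (f z (π z))
      have h6 : Lv * ‖f z (π z)‖ ≤ Lv * (Lf * max 1 (Lπ + c₁) * ε) :=
        mul_le_mul_of_nonneg_left hns hLv0
      have h7 : Lv * (Lf * max 1 (Lπ + c₁) * ε) ≤ c₂ * ε := by
        rw [hc₂def]
        have h8 : (0:ℝ) ≤ Lf * max 1 (Lπ + c₁) * ε := by positivity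
        nlinarith [le_max_left Lv (1:ℝ)]
      linarith
    · have hVz : V z ≤ c₂ * ε := hz.resolve_left (not_lt.mpr hbig)
      refine ⟨hinv z hzR (le_of_lt (lt_of_le_of_lt hVz hc₂ρ)), Or.inr ?_⟩
      have := hdec z hzR hbig
      linarith
  -- membership in invariant set implies small norm
  have hΩη : ∀ z : Fin n → ℝ, z ∈ R → (‖z‖ < ε ∨ V z ≤ c₂ * ε) → ‖z‖ ≤ η := by
    intro z hzR hz
    rcases hz with hsmall | hVz
    · linarith [le_trans hεM hMη]
    · by_contra hcon
      push_neg at hcon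
      have := hμlb z hzR hcon.le
      linarith
  -- Phase 1: decrease until entering the ε-ball
  have hH : ∀ k : ℕ, (∀ j ≤ k, ε ≤ ‖x j‖) → x k ∈ R ∧ V (x k) ≤ ρ - k * ζ := by
    intro k
    induction k with
    | zero => intro _; exact ⟨hx0R, by simpa using hx0V⟩
    | succ k ih =>
      intro hall
      have hk := ih (fun j hj => hall j (Nat.le_succ_of_le hj))
      have hkε := hall k (Nat.le_succ k)
      have hdk := hdec (x k) hk.1 hkε
      have hkζ : (0:ℝ) ≤ (k:ℝ) * ζ := mul_nonneg (Nat.cast_nonneg k) hζ.le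
      constructor
      · rw [hx k]; exact hinv (x k) hk.1 (by linarith [hk.2])
      · rw [hx k]; push_cast; nlinarith [hk.2]
  have hreach : ∃ j : ℕ, ‖x j‖ < ε := by
    by_contra h
    push_neg at h
    obtain ⟨k, hk⟩ := exists_nat_gt (ρ / ζ)
    have h1 := hH k (fun j _ => h j)
    have h2 := hVpos (x k) h1.1 (h k)
    rw [div_lt_iff₀ hζ] at hk
    linarith [h1.2]
  have hmin : ∃ K : ℕ, ‖x K‖ < ε ∧ ∀ j < K, ε ≤ ‖x j‖ := by
    classical
    exact ⟨Nat.find hreach, Nat.find_spec hreach,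
      fun i hi => not_lt.mp (Nat.find_min hreach hi)⟩
  obtain ⟨K, hKspec, hKmin⟩ := hmin
  have hxKR : x K ∈ R := by
    cases K with
    | zero => exact hx0R
    | succ K' =>
      rw [hx K']
      have hprev := hH K' (fun j hj => hKmin j (by omega))
      have hkζ : (0:ℝ) ≤ (K' : ℝ) * ζ := mul_nonneg (Nat.cast_nonneg _) hζ.le
      exact hinv _ hprev.1 (by linarith [hprev.2])
  -- Phase 2: stay in the invariant set
  have hΩall : ∀ d : ℕ, x (K + d) ∈ R ∧ (‖x (K + d)‖ < ε ∨ V (x (K + d)) ≤ c₂ * ε) := by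
    intro d
    induction d with
    | zero => exact ⟨hxKR, Or.inl hKspec⟩
    | succ d ih =>
      have hstep := hΩstep _ ih.1 ih.2
      have : K + (d + 1) = (K + d) + 1 := rfl
      rw [this, hx (K + d)]
      exact hstep
  refine ⟨K, fun k hk => ?_⟩
  obtain ⟨d, rfl⟩ := Nat.exists_eq_add_of_le hk
  exact hΩη _ (hΩall d).1 (hΩall d).2
end

section
/- Let γ > 0 and R(γ) = {x ∈ ℝⁿ : ‖x‖∞ ≤ γ}. Suppose (V, π) is ε-stable on R(γ) with margin ζ, f is L_f-Lipschitz with respect to the max of the two sup norms, π is L_π-Lipschitz, f(0, u₀) = 0, ‖π(0) − u₀‖∞ ≤ ε, and γ ≥ L_f · max{1, L_π + 1} · ε. Let B ≥ γ be a constant with ‖f(x, π(x))‖∞ ≤ B for all x ∈ R(γ), let V* ∈ ℝ satisfy V* ≤ V(x) for all x with γ ≤ ‖x‖∞ ≤ B, and let ρ = V* − μ for some μ > 0. Then D(γ, ρ) = {x : ‖x‖∞ ≤ γ and V(x) ≤ ρ} is R(γ)-invariant: every x ∈ D(γ, ρ) satisfies ‖f(x, π(x))‖∞ ≤ γ. 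-/
/-- the strict sublevel set D(γ, ρ) with ρ = V* − μ is
R(γ)-invariant, where V* lower-bounds V on the annulus γ ≤ ‖x‖ ≤ B. -/
theorem sublevel_set_invariant {n m : ℕ}
    (f : (Fin n → ℝ) → (Fin m → ℝ) → (Fin n → ℝ))
    (π : (Fin n → ℝ) → (Fin m → ℝ))
    (V : (Fin n → ℝ) → ℝ) (u₀ : Fin m → ℝ)
    (Lf Lπ ε ζ γ B Vstar μ ρ : ℝ)
    (hγ : 0 < γ) (hε : 0 < ε) (hζ : 0 < ζ)
    (hLf0 : 0 ≤ Lf) (hLπ0 : 0 ≤ Lπ)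
    (hV0 : V 0 = 0)
    (hdec : ∀ x : Fin n → ℝ, ‖x‖ ≤ γ → ε ≤ ‖x‖ → V (f x (π x)) - V x < -ζ)
    (hpos : ∀ x : Fin n → ℝ, ‖x‖ ≤ γ → ε ≤ ‖x‖ → 0 < V x)
    (hf : ∀ (x₁ x₂ : Fin n → ℝ) (u₁ u₂ : Fin m → ℝ),
      ‖f x₁ u₁ - f x₂ u₂‖ ≤ Lf * max ‖x₁ - x₂‖ ‖u₁ - u₂‖)
    (hπ : ∀ x y : Fin n → ℝ, ‖π x - π y‖ ≤ Lπ * ‖x - y‖)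
    (hf0 : f 0 u₀ = 0)
    (hπ0 : ‖π 0 - u₀‖ ≤ ε)
    (hγε : Lf * max 1 (Lπ + 1) * ε ≤ γ)
    (hB : γ ≤ B)
    (hBf : ∀ x : Fin n → ℝ, ‖x‖ ≤ γ → ‖f x (π x)‖ ≤ B)
    (hVstar : ∀ x : Fin n → ℝ, γ ≤ ‖x‖ → ‖x‖ ≤ B → Vstar ≤ V x)
    (hμ : 0 < μ) (hρ : ρ = Vstar - μ) :
    ∀ x : Fin n → ℝ, ‖x‖ ≤ γ → V x ≤ ρ → ‖f x (π x)‖ ≤ γ := by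
  intro x hxγ hxρ
  by_cases hxε : ε ≤ ‖x‖
  · -- large x: use the decrease condition and the annulus lower bound
    by_contra hcon
    push_neg at hcon
    have h1 : Vstar ≤ V (f x (π x)) :=
      hVstar _ hcon.le (hBf x hxγ)
    have h2 : V (f x (π x)) - V x < -ζ := hdec x hxγ hxε
    have : V (f x (π x)) < V x := by linarith
    have : V (f x (π x)) ≤ ρ := le_trans this.le hxρ
    rw [hρ] at this
    linarith
  · -- small x: Lipschitz bound
    push_neg at hxε
    have hπx : ‖π x - u₀‖ ≤ (Lπ + 1) * ε := by
      calc ‖π x - u₀‖ ≤ ‖π x - π 0‖ + ‖π 0 - u₀‖ := norm_sub_le_norm_sub_add_norm_sub _ _ _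
        _ ≤ Lπ * ‖x - 0‖ + ε := add_le_add (hπ x 0) hπ0
        _ = Lπ * ‖x‖ + ε := by rw [sub_zero]
        _ ≤ Lπ * ε + ε := by nlinarith
        _ = (Lπ + 1) * ε := by ring
    have hmax : max ‖x - 0‖ ‖π x - u₀‖ ≤ max 1 (Lπ + 1) * ε := by
      rw [sub_zero]
      apply max_le
      · calc ‖x‖ ≤ ε := hxε.le
          _ = 1 * ε := (one_mul ε).symm
          _ ≤ max 1 (Lπ + 1) * ε := by
            apply mul_le_mul_of_nonneg_right (le_max_left _ _) hε.le
      · calc ‖π x - u₀‖ ≤ (Lπ + 1) * ε := hπx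
          _ ≤ max 1 (Lπ + 1) * ε :=
            mul_le_mul_of_nonneg_right (le_max_right _ _) hε.le
    calc ‖f x (π x)‖ = ‖f x (π x) - f 0 u₀‖ := by rw [hf0, sub_zero]
      _ ≤ Lf * max ‖x - 0‖ ‖π x - u₀‖ := hf x 0 (π x) u₀
      _ ≤ Lf * (max 1 (Lπ + 1) * ε) := mul_le_mul_of_nonneg_left hmax hLf0
      _ = Lf * max 1 (Lπ + 1) * ε := by ring
      _ ≤ γ := hγε
end
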